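/- arXiv:2012.10701 — 5 statements merged into one kernel-verified Lean document; each statement's English description precedes it below -/
import Mathlib

section
/- For α ∈ (d/(d+2), 1), there exists a constant C = C(d, α) such that for every probability density ρ on ℝ^d with finite second moment, Ent(ρ) ≥ −C(1 + m₂(ρ))^α, where Ent(ρ) = ∫ ρ log ρ and m₂(ρ) = ∫ ‖x‖² ρ(x) dx. -/
/-! Comparing `ρ` with the centred Gaussian of variance `1 + m₂(ρ)` (Gibbs' inequality) gives
`Ent(ρ) ≥ -1/2 - (d/2) log (2π (1 + m₂(ρ)))`, and `log s ≤ s^α / α` turns the logarithm into the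
power `(1 + m₂(ρ))^α`. -/

open MeasureTheory Real

noncomputable section

/-- `ℝ^d` with the Euclidean norm. -/
abbrev Esp (d : ℕ) := EuclideanSpace ℝ (Fin d)

lemma mul_log_add_sub_le_mul_log {a p : ℝ} (ha : 0 ≤ a) (hp : 0 < p) :
    a * log p + (a - p) ≤ a * log a := by
  rcases ha.eq_or_lt with rfl | ha
  · simpa using hp.le
  · have hlog : log (p / a) ≤ p / a - 1 := log_le_sub_one_of_pos (div_pos hp ha)
    rw [log_div hp.ne' ha.ne'] at hlog
    have hpa : a * (p / a - 1) = p - a := by field_simp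
    nlinarith [mul_le_mul_of_nonneg_left hlog ha.le]

section Gibbs

variable {Ω : Type*} [MeasurableSpace Ω] {μ : Measure Ω} {f g : Ω → ℝ}

theorem integral_mul_log_le_integral_mul_log (hf : ∀ x, 0 ≤ f x) (hg : ∀ x, 0 < g x)
    (hf_one : ∫ x, f x ∂μ = 1) (hg_one : ∫ x, g x ∂μ = 1)
    (hfg : Integrable (fun x => f x * log (g x)) μ)
    (hff : Integrable (fun x => f x * log (f x)) μ) :
    ∫ x, f x * log (g x) ∂μ ≤ ∫ x, f x * log (f x) ∂μ := by
  have hf_int : Integrable f μ := .of_integral_ne_zero (by simp [hf_one])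
  have hg_int : Integrable g μ := .of_integral_ne_zero (by simp [hg_one])
  have hdiff : Integrable (fun x => f x - g x) μ := hf_int.sub hg_int
  calc ∫ x, f x * log (g x) ∂μ = ∫ x, f x * log (g x) + (f x - g x) ∂μ := by
        rw [integral_add hfg hdiff, integral_sub hf_int hg_int, hf_one, hg_one, sub_self,
          add_zero]
    _ ≤ ∫ x, f x * log (f x) ∂μ :=
        integral_mono (hfg.add hdiff) hff fun x => mul_log_add_sub_le_mul_log (hf x) (hg x)

end Gibbs

section Gaussian

variable {V : Type*} [NormedAddCommGroup V] [InnerProductSpace ℝ V] {s : ℝ}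

def gaussianDensity (s : ℝ) (x : V) : ℝ :=
  (2 * π * s) ^ (-(Module.finrank ℝ V : ℝ) / 2) * exp (-‖x‖ ^ 2 / (2 * s))

lemma gaussianDensity_pos (hs : 0 < s) (x : V) : 0 < gaussianDensity s x := by
  unfold gaussianDensity; positivity

lemma log_gaussianDensity (hs : 0 < s) (x : V) :
    log (gaussianDensity s x) =
      -‖x‖ ^ 2 / (2 * s) - Module.finrank ℝ V / 2 * log (2 * π * s) := by
  rw [gaussianDensity, log_mul (by positivity) (exp_pos _).ne', log_rpow (by positivity),
    log_exp]
  ring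

variable [FiniteDimensional ℝ V] [MeasurableSpace V] [BorelSpace V]

lemma integral_gaussianDensity (hs : 0 < s) : ∫ x : V, gaussianDensity s x = 1 := by
  have hb : 0 < (2 * s)⁻¹ := by positivity
  have hexp : ∀ x : V, exp (-‖x‖ ^ 2 / (2 * s)) = exp (-(2 * s)⁻¹ * ‖x‖ ^ 2) := fun x => by
    rw [neg_mul, inv_mul_eq_div, neg_div]
  have hπ : π / (2 * s)⁻¹ = 2 * π * s := by field_simp
  simp only [gaussianDensity, hexp]
  rw [integral_const_mul, GaussianFourier.integral_rexp_neg_mul_sq_norm hb, hπ, neg_div,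
    rpow_neg (by positivity), inv_mul_cancel₀ (by positivity)]

theorem neg_second_moment_div_sub_le_integral_mul_log (hs : 0 < s) {f : V → ℝ}
    (hf : ∀ x, 0 ≤ f x) (hf_one : ∫ x, f x = 1)
    (hm : Integrable (fun x => ‖x‖ ^ 2 * f x))
    (hff : Integrable (fun x => f x * log (f x))) :
    -(∫ x, ‖x‖ ^ 2 * f x) / (2 * s) - Module.finrank ℝ V / 2 * log (2 * π * s) ≤
      ∫ x, f x * log (f x) := by
  have hf_int : Integrable f := .of_integral_ne_zero (by simp [hf_one])
  have hlog : (fun x => f x * log (gaussianDensity s x)) = fun x =>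
      -(2 * s)⁻¹ * (‖x‖ ^ 2 * f x) - Module.finrank ℝ V / 2 * log (2 * π * s) * f x := by
    ext x; rw [log_gaussianDensity hs]; ring
  have hcross : Integrable (fun x => f x * log (gaussianDensity s x)) := by
    rw [hlog]; exact (hm.const_mul _).sub (hf_int.const_mul _)
  calc -(∫ x, ‖x‖ ^ 2 * f x) / (2 * s) - Module.finrank ℝ V / 2 * log (2 * π * s)
      = ∫ x, f x * log (gaussianDensity s x) := by
        rw [hlog, integral_sub (hm.const_mul _) (hf_int.const_mul _), integral_const_mul,
          integral_const_mul, hf_one]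
        ring
    _ ≤ ∫ x, f x * log (f x) :=
        integral_mul_log_le_integral_mul_log hf (gaussianDensity_pos hs) hf_one
          (integral_gaussianDensity hs) hcross hff

theorem neg_log_one_add_second_moment_le_integral_mul_log {f : V → ℝ}
    (hf : ∀ x, 0 ≤ f x) (hf_one : ∫ x, f x = 1)
    (hm : Integrable (fun x => ‖x‖ ^ 2 * f x))
    (hff : Integrable (fun x => f x * log (f x))) :
    -1 / 2 - Module.finrank ℝ V / 2 * log (2 * π * (1 + ∫ x, ‖x‖ ^ 2 * f x)) ≤
      ∫ x, f x * log (f x) := by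
  set m := ∫ x, ‖x‖ ^ 2 * f x
  have hm0 : 0 ≤ m := integral_nonneg fun x => mul_nonneg (by positivity) (hf x)
  have hmoment : -1 / 2 ≤ -m / (2 * (1 + m)) := by
    rw [div_le_div_iff₀ two_pos (by positivity)]; linarith
  linarith [neg_second_moment_div_sub_le_integral_mul_log (by positivity : 0 < 1 + m) hf hf_one
    hm hff]

end Gaussian

theorem entropy_lower_bound_general {d : ℕ} (α : ℝ)
    (hα1 : (d : ℝ) / (d + 2) < α) :
    ∃ C : ℝ, 0 < C ∧
      ∀ f : Esp d → ℝ, (∀ x, 0 ≤ f x) → Integrable f volume →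
        (∫ x, f x ∂volume) = 1 →
        Integrable (fun x => ‖x‖ ^ 2 * f x) volume →
        Integrable (fun x => f x * Real.log (f x)) volume →
        -C * (1 + ∫ x, ‖x‖ ^ 2 * f x ∂volume) ^ α ≤
          ∫ x, f x * Real.log (f x) ∂volume := by
  have hα : 0 < α := lt_of_le_of_lt (by positivity) hα1
  have hlog2π : 0 < log (2 * π) := log_pos (by linarith [pi_gt_three])
  refine ⟨1 / 2 + d / 2 * log (2 * π) + d / (2 * α), by positivity, ?_⟩
  intro f hf _ hf_one hm hff
  set s := 1 + ∫ x, ‖x‖ ^ 2 * f x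
  have hs : 1 ≤ s :=
    le_add_of_nonneg_right (integral_nonneg fun x => mul_nonneg (by positivity) (hf x))
  have hsα : 1 ≤ s ^ α := one_le_rpow hs hα.le
  have hlog_s : d / 2 * log s ≤ d / (2 * α) * s ^ α := by
    calc d / 2 * log s ≤ d / 2 * (s ^ α / α) := by
          gcongr; exact log_le_rpow_div (by positivity) hα
      _ = d / (2 * α) * s ^ α := by field_simp
  have hgauss := neg_log_one_add_second_moment_le_integral_mul_log hf hf_one hm hff
  rw [finrank_euclideanSpace_fin, log_mul (by positivity) (by positivity)] at hgauss
  have hconst : 1 / 2 + d / 2 * log (2 * π) ≤ (1 / 2 + d / 2 * log (2 * π)) * s ^ α :=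
    le_mul_of_one_le_right (by positivity) hsα
  linarith

/-- for `α ∈ (d/(d+2), 1)` there is `C = C(d, α)` such that every
probability density `ρ` on `ℝ^d` with finite second moment satisfies
`Ent(ρ) ≥ −C (1 + m₂(ρ))^α`. -/
theorem entropy_lower_bound {d : ℕ} (α : ℝ)
    (hα1 : (d : ℝ) / (d + 2) < α) (hα2 : α < 1) :
    ∃ C : ℝ, 0 < C ∧
      ∀ f : Esp d → ℝ, (∀ x, 0 ≤ f x) → Integrable f volume →
        (∫ x, f x ∂volume) = 1 →
        Integrable (fun x => ‖x‖ ^ 2 * f x) volume →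
        Integrable (fun x => f x * Real.log (f x)) volume →
        -C * (1 + ∫ x, ‖x‖ ^ 2 * f x ∂volume) ^ α ≤
          ∫ x, f x * Real.log (f x) ∂volume :=
  entropy_lower_bound_general α hα1

end
end

section
/- Let Φ(S) = λI + E[(S^{1/2} S_ν S^{1/2})^{1/2}] where S_ν are random positive semi-definite d×d matrices with E[S_ν] ≤ σ²I and λ > 0. Set α = 2λ + dσ². Then Φ maps the set {S symmetric : λI ≤ S ≤ αI} into itself. -/
/-!
Work in the Loewner order, where `msqrt` is the continuous functional calculus square root.
For each `ν`, `S_ν ≤ tr(S_ν) I`, so conjugating by `S^{1/2}` gives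
`S^{1/2} S_ν S^{1/2} ≤ tr(S_ν) S ≤ α tr(S_ν) I`. A positive semi-definite matrix below `c I` has
its spectrum below `c`, so its square root is below `√c I`, and `√(α tr S_ν) ≤ (α + tr S_ν) / 2`.
Taking expectations and using `E[tr S_ν] = tr E[S_ν] ≤ dσ²` yields
`E[(S^{1/2} S_ν S^{1/2})^{1/2}] ≤ (α + dσ²) / 2 · I = (α - λ) I`. The lower bound `λ I ≤ Φ(S)` is
the positivity of an expectation of positive semi-definite matrices.
-/

open MeasureTheory

noncomputable section

open Classical in
/-- Square root of a positive semi-definite matrix (junk value `0` otherwise). -/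
def msqrt {d : ℕ} (A : Matrix (Fin d) (Fin d) ℝ) : Matrix (Fin d) (Fin d) ℝ :=
  if h : A.PosSemidef then h.1.eigenvectorUnitary.1 * Matrix.diagonal ((↑) ∘ Real.sqrt ∘ h.1.eigenvalues) *
    (star h.1.eigenvectorUnitary : Matrix (Fin d) (Fin d) ℝ) else 0

open scoped MatrixOrder

lemma msqrt_eq_cfcSqrt {d : ℕ} (A : Matrix (Fin d) (Fin d) ℝ) : msqrt A = CFC.sqrt A := by
  by_cases hA : A.PosSemidef
  · rw [CFC.sqrt_eq_real_sqrt A hA.nonneg, cfcₙ_eq_cfc, hA.1.cfc_eq, Matrix.IsHermitian.cfc,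
      Unitary.conjStarAlgAut_apply, msqrt, dif_pos hA]
    rfl
  · rw [msqrt, dif_neg hA, CFC.sqrt_of_not_nonneg (mt Matrix.LE.le.posSemidef hA)]

namespace Matrix

variable {n : Type*}

lemma smul_one_le_smul_one [DecidableEq n] {a b : ℝ} (h : a ≤ b) :
    a • (1 : Matrix n n ℝ) ≤ b • 1 := by
  rw [le_iff, ← sub_smul]
  exact PosSemidef.one.smul (sub_nonneg.mpr h)

variable [Fintype n]

lemma trace_le_of_le_smul_one [DecidableEq n] {A : Matrix n n ℝ} {c : ℝ} (h : A ≤ c • 1) :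
    A.trace ≤ Fintype.card n * c := by
  have := (le_iff.mp h).trace_nonneg
  rw [trace_sub, trace_smul, trace_one, smul_eq_mul] at this
  linarith

lemma PosSemidef.le_trace_smul_one [DecidableEq n] {A : Matrix n n ℝ} (hA : A.PosSemidef) :
    A ≤ A.trace • 1 := by
  rw [← Algebra.algebraMap_eq_smul_one, le_algebraMap_iff_spectrum_le hA.1.isSelfAdjoint]
  rintro x hx
  obtain ⟨i, rfl⟩ := hA.1.spectrum_real_eq_range_eigenvalues ▸ hx
  rw [hA.1.trace_eq_sum_eigenvalues]
  exact Finset.single_le_sum (fun j _ => hA.eigenvalues_nonneg j) (Finset.mem_univ i)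

lemma sqrt_le_sqrt_smul_one [DecidableEq n] {A : Matrix n n ℝ} (hA : A.PosSemidef) {c : ℝ}
    (h : A ≤ c • 1) : CFC.sqrt A ≤ √c • 1 := by
  rw [← Algebra.algebraMap_eq_smul_one] at h ⊢
  rw [le_algebraMap_iff_spectrum_le hA.1.isSelfAdjoint] at h
  rw [CFC.sqrt_eq_real_sqrt A hA.nonneg, cfcₙ_eq_cfc, cfc_le_algebraMap_iff _ _ _]
  exact fun x hx => Real.sqrt_le_sqrt (h x hx)

lemma sqrt_sqrt_mul_mul_sqrt_le [DecidableEq n] {S A : Matrix n n ℝ} {α : ℝ} (hα : 0 ≤ α)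
    (hS : S.PosSemidef) (hSα : S ≤ α • 1) (hA : A.PosSemidef) :
    CFC.sqrt (CFC.sqrt S * A * CFC.sqrt S) ≤ ((α + A.trace) / 2) • 1 := by
  have hconj : CFC.sqrt S * A * CFC.sqrt S ≤ (A.trace * α) • 1 := calc
    CFC.sqrt S * A * CFC.sqrt S ≤ CFC.sqrt S * (A.trace • 1) * CFC.sqrt S :=
      conjugate_le_conjugate_of_nonneg hA.le_trace_smul_one (CFC.sqrt_nonneg S)
    _ = A.trace • S := by
      rw [mul_smul_comm, mul_one, smul_mul_assoc, CFC.sqrt_mul_sqrt_self S hS.nonneg]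
    _ ≤ (A.trace * α) • 1 := by
      rw [le_iff, mul_smul, ← smul_sub]
      exact hSα.smul hA.trace_nonneg
  have hconj_psd : (CFC.sqrt S * A * CFC.sqrt S).PosSemidef :=
    nonneg_iff_posSemidef.mp (conjugate_nonneg_of_nonneg hA.nonneg (CFC.sqrt_nonneg S))
  have hamgm : √(A.trace * α) ≤ (α + A.trace) / 2 := by
    rw [Real.sqrt_le_iff]
    constructor
    · linarith [hA.trace_nonneg]
    · nlinarith [sq_nonneg (α - A.trace)]
  calc CFC.sqrt (CFC.sqrt S * A * CFC.sqrt S) ≤ √(A.trace * α) • 1 :=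
        sqrt_le_sqrt_smul_one hconj_psd hconj
    _ ≤ ((α + A.trace) / 2) • 1 := smul_one_le_smul_one hamgm

section Integral

variable {X : Type*} [MeasurableSpace X] {μ : Measure X}

lemma dotProduct_of_integral_mulVec {f : X → Matrix n n ℝ}
    (hf : ∀ i j, Integrable (fun x => f x i j) μ) (v : n → ℝ) :
    v ⬝ᵥ (of fun i j => ∫ x, f x i j ∂μ) *ᵥ v = ∫ x, v ⬝ᵥ f x *ᵥ v ∂μ := by
  have hterm : ∀ i j, Integrable (fun x => v i * (f x i j * v j)) μ :=
    fun i j => ((hf i j).mul_const (v j)).const_mul (v i)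
  simp only [dotProduct, mulVec, of_apply, Finset.mul_sum]
  rw [integral_finsetSum _ fun i _ => integrable_finsetSum _ fun j _ => hterm i j]
  refine Finset.sum_congr rfl fun i _ => ?_
  rw [integral_finsetSum _ fun j _ => hterm i j]
  simp only [integral_const_mul, integral_mul_const]

lemma posSemidef_of_integral {f : X → Matrix n n ℝ} (hf : ∀ i j, Integrable (fun x => f x i j) μ)
    (hpsd : ∀ᵐ x ∂μ, (f x).PosSemidef) : (of fun i j => ∫ x, f x i j ∂μ).PosSemidef := by
  refine .of_dotProduct_mulVec_nonneg ?_ fun v => ?_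
  · ext i j
    refine integral_congr_ae ?_
    filter_upwards [hpsd] with x hx
    exact congrFun (congrFun hx.1 i) j
  · rw [star_trivial, dotProduct_of_integral_mulVec hf]
    refine integral_nonneg_of_ae ?_
    filter_upwards [hpsd] with x hx
    simpa using hx.dotProduct_mulVec_nonneg v

lemma of_integral_le_integral_smul_one [DecidableEq n] {f : X → Matrix n n ℝ} {g : X → ℝ}
    (hf : ∀ i j, Integrable (fun x => f x i j) μ) (hg : Integrable g μ)
    (h : ∀ᵐ x ∂μ, f x ≤ g x • 1) : (of fun i j => ∫ x, f x i j ∂μ) ≤ (∫ x, g x ∂μ) • 1 := by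
  have hgf : ∀ i j, Integrable (fun x => (g x • 1 - f x) i j) μ :=
    fun i j => (hg.mul_const _).sub (hf i j)
  have hsub : (∫ x, g x ∂μ) • 1 - (of fun i j => ∫ x, f x i j ∂μ) =
      of fun i j => ∫ x, (g x • 1 - f x) i j ∂μ := by
    ext i j
    simp only [sub_apply, smul_apply, of_apply, smul_eq_mul]
    rw [integral_sub (hg.mul_const _) (hf i j), integral_mul_const]
  rw [le_iff, hsub]
  exact posSemidef_of_integral hgf h

lemma trace_of_integral {f : X → Matrix n n ℝ} (hf : ∀ i, Integrable (fun x => f x i i) μ) :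
    (of fun i j => ∫ x, f x i j ∂μ).trace = ∫ x, (f x).trace ∂μ :=
  (integral_finsetSum _ fun i _ => hf i).symm

end Integral

end Matrix

open Matrix in
theorem gaussian_fixed_point_map_invariant_general {d : ℕ}
    {X : Type*} [MeasurableSpace X] (Q : Measure X) [IsProbabilityMeasure Q]
    (Sν : X → Matrix (Fin d) (Fin d) ℝ)
    (hpsd : ∀ᵐ x ∂Q, (Sν x).PosSemidef)
    (hint : ∀ i j, Integrable (fun x => Sν x i j) Q)
    (σ lam : ℝ) (hlam : 0 < lam)
    (hE : (σ ^ 2 • (1 : Matrix (Fin d) (Fin d) ℝ) -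
      Matrix.of fun i j => ∫ x, Sν x i j ∂Q).PosSemidef)
    (S : Matrix (Fin d) (Fin d) ℝ)
    (hSlow : (S - lam • (1 : Matrix (Fin d) (Fin d) ℝ)).PosSemidef)
    (hShigh : (((2 * lam + d * σ ^ 2) • (1 : Matrix (Fin d) (Fin d) ℝ)) - S).PosSemidef)
    (hint' : ∀ i j, Integrable (fun x => msqrt (msqrt S * Sν x * msqrt S) i j) Q) :
    (lam • (1 : Matrix (Fin d) (Fin d) ℝ) +
        Matrix.of (fun i j => ∫ x, msqrt (msqrt S * Sν x * msqrt S) i j ∂Q) -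
        lam • (1 : Matrix (Fin d) (Fin d) ℝ)).PosSemidef ∧
      (((2 * lam + d * σ ^ 2) • (1 : Matrix (Fin d) (Fin d) ℝ)) -
        (lam • (1 : Matrix (Fin d) (Fin d) ℝ) +
          Matrix.of (fun i j => ∫ x, msqrt (msqrt S * Sν x * msqrt S) i j ∂Q))).PosSemidef := by
  set α := 2 * lam + d * σ ^ 2
  have hS : S.PosSemidef := by simpa using hSlow.add (PosSemidef.one.smul hlam.le)
  have htrace : Integrable (fun x => (Sν x).trace) Q := integrable_finsetSum _ fun i _ => hint i i
  have hmean_trace : ∫ x, (Sν x).trace ∂Q ≤ d * σ ^ 2 := by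
    simpa [trace_of_integral fun i => hint i i] using trace_le_of_le_smul_one (le_iff.mpr hE)
  have hpointwise : ∀ᵐ x ∂Q, msqrt (msqrt S * Sν x * msqrt S) ≤ ((α + (Sν x).trace) / 2) • 1 := by
    filter_upwards [hpsd] with x hx
    simpa only [msqrt_eq_cfcSqrt] using sqrt_sqrt_mul_mul_sqrt_le (by positivity) hS hShigh hx
  have hmean : (of fun i j => ∫ x, msqrt (msqrt S * Sν x * msqrt S) i j ∂Q) ≤
      (α - lam) • 1 := calc
    _ ≤ (∫ x, (α + (Sν x).trace) / 2 ∂Q) • 1 :=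
      of_integral_le_integral_smul_one hint' (((integrable_const α).add htrace).div_const 2)
        hpointwise
    _ ≤ (α - lam) • 1 := by
      refine smul_one_le_smul_one ?_
      rw [integral_div, integral_add (integrable_const α) htrace, integral_const]
      simp only [probReal_univ, one_smul]
      linarith
  refine ⟨?_, ?_⟩
  · rw [add_sub_cancel_left]
    refine posSemidef_of_integral hint' (ae_of_all _ fun x => ?_)
    exact nonneg_iff_posSemidef.mp (msqrt_eq_cfcSqrt _ ▸ CFC.sqrt_nonneg _)
  · rw [← le_iff]
    calc _ ≤ lam • 1 + (α - lam) • (1 : Matrix (Fin d) (Fin d) ℝ) :=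
        add_le_add le_rfl hmean
      _ = α • 1 := by rw [← add_smul, add_sub_cancel]

/-- the map `Φ(S) = λI + E[(S^{1/2} S_ν S^{1/2})^{1/2}]` maps the
set `{S symmetric : λI ≤ S ≤ αI}` into itself, where `α = 2λ + dσ²`. -/
theorem gaussian_fixed_point_map_invariant {d : ℕ}
    {X : Type*} [MeasurableSpace X] (Q : Measure X) [IsProbabilityMeasure Q]
    (Sν : X → Matrix (Fin d) (Fin d) ℝ)
    (hpsd : ∀ᵐ x ∂Q, (Sν x).PosSemidef)
    (hint : ∀ i j, Integrable (fun x => Sν x i j) Q)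
    (σ lam : ℝ) (hσ : 0 < σ) (hlam : 0 < lam)
    (hE : (σ ^ 2 • (1 : Matrix (Fin d) (Fin d) ℝ) -
      Matrix.of fun i j => ∫ x, Sν x i j ∂Q).PosSemidef)
    (S : Matrix (Fin d) (Fin d) ℝ) (hSsymm : S.IsSymm)
    (hSlow : (S - lam • (1 : Matrix (Fin d) (Fin d) ℝ)).PosSemidef)
    (hShigh : (((2 * lam + d * σ ^ 2) • (1 : Matrix (Fin d) (Fin d) ℝ)) - S).PosSemidef)
    (hint' : ∀ i j, Integrable (fun x => msqrt (msqrt S * Sν x * msqrt S) i j) Q) :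
    (lam • (1 : Matrix (Fin d) (Fin d) ℝ) +
        Matrix.of (fun i j => ∫ x, msqrt (msqrt S * Sν x * msqrt S) i j ∂Q) -
        lam • (1 : Matrix (Fin d) (Fin d) ℝ)).PosSemidef ∧
      (((2 * lam + d * σ ^ 2) • (1 : Matrix (Fin d) (Fin d) ℝ)) -
        (lam • (1 : Matrix (Fin d) (Fin d) ℝ) +
          Matrix.of (fun i j => ∫ x, msqrt (msqrt S * Sν x * msqrt S) i j ∂Q))).PosSemidef :=
  gaussian_fixed_point_map_invariant_general Q Sν hpsd hint σ lam hlam hE S hSlow hShigh hint'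

end
end

section
/- Let B̄ be a closed ball in ℝ^d centered at the origin with radius R, and let φ ∈ C¹(B̄) be strictly convex. Then ∇φ(B̄) = B̄ if and only if ∇φ(∂B) ⊆ ∂B. -/
open Metric

noncomputable section

/-!
Strict convexity makes the gradient strictly monotone: `0 < ⟪∇φ y - ∇φ x, y - x⟫` for `x ≠ y`.

If `∇φ(B̄) = B̄` and some `x ∈ ∂B` had `‖∇φ x‖ < R`, then `∇φ x + t x = ∇φ y` for some `y ∈ B̄`
and small `t > 0`, and monotonicity contradicts `⟪x, y - x⟫ ≤ 0`.

Conversely, let `∇φ(∂B) ⊆ ∂B`. If the ray `x + t ∇φ x`, `t > 0`, meets `∂B` at `y`, monotonicity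
gives `‖∇φ x‖² < ⟪∇φ y, ∇φ x⟫ ≤ R ‖∇φ x‖`; this applies to every interior `x`, so `∇φ(B̄) ⊆ B̄`.
For `‖p‖ < R`, a minimiser `x₀` of `φ - ⟪p, ·⟫` on `B̄` has `∇φ x₀ = p`: otherwise the first-order
condition puts `x₀` on `∂B`, opposite to `∇φ x₀ - p`, which forces `⟪x₀, ∇φ x₀⟫ < 0`, so the ray
from `x₀` re-enters the ball and `‖∇φ x₀‖ < R`, which is absurd. The image of `B̄` is compact, so
it contains the closure of the open ball.
-/

open Set AffineMap
open scoped RealInnerProductSpace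

section

variable {E : Type*} [NormedAddCommGroup E] [InnerProductSpace ℝ E]

def StrictMonotoneOn (F : E → E) (s : Set E) : Prop :=
  ∀ x ∈ s, ∀ y ∈ s, x ≠ y → 0 < ⟪F y - F x, y - x⟫

theorem StrictConvexOn.comp_lineMap {s : Set E} {f : E → ℝ} (hf : StrictConvexOn ℝ s f)
    {x y : E} (hx : x ∈ s) (hy : y ∈ s) (hxy : x ≠ y) :
    StrictConvexOn ℝ (Icc (0 : ℝ) 1) (f ∘ lineMap x y) := by
  refine ⟨convex_Icc 0 1, fun a ha b hb hab μ ν hμ hν hμν => ?_⟩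
  simp only [Function.comp_apply, Convex.combo_affine_apply hμν]
  exact hf.2 (hf.1.lineMap_mem hx hy ha) (hf.1.lineMap_mem hx hy hb)
    ((lineMap_injective ℝ hxy).ne hab) hμ hν hμν

theorem HasGradientWithinAt.hasDerivWithinAt_comp_lineMap [CompleteSpace E] {f : E → ℝ}
    {f' x y : E} {s : Set E} {u : Set ℝ} {t : ℝ}
    (hf : HasGradientWithinAt f f' s (lineMap x y t)) (hu : MapsTo (lineMap x y) u s) :
    HasDerivWithinAt (f ∘ lineMap x y) ⟪f', y - x⟫ u t := by
  simpa using (hasGradientWithinAt_iff_hasFDerivWithinAt.mp hf).comp_hasDerivWithinAt t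
    hasDerivAt_lineMap.hasDerivWithinAt hu

theorem StrictConvexOn.strictMonotoneOn_of_hasGradientWithinAt [CompleteSpace E] {s : Set E}
    {f : E → ℝ} {f' : E → E} (hf : StrictConvexOn ℝ s f)
    (hf' : ∀ x ∈ s, HasGradientWithinAt f (f' x) s x) : StrictMonotoneOn f' s := by
  intro x hx y hy hxy
  have hmaps : MapsTo (lineMap x y) (Icc (0 : ℝ) 1) s := hf.1.mapsTo_lineMap hx hy
  have hd₀ : HasDerivWithinAt (f ∘ lineMap x y) ⟪f' x, y - x⟫ (Icc 0 1) (0 : ℝ) :=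
    HasGradientWithinAt.hasDerivWithinAt_comp_lineMap
      (by rw [lineMap_apply_zero]; exact hf' x hx) hmaps
  have hd₁ : HasDerivWithinAt (f ∘ lineMap x y) ⟪f' y, y - x⟫ (Icc 0 1) (1 : ℝ) :=
    HasGradientWithinAt.hasDerivWithinAt_comp_lineMap
      (by rw [lineMap_apply_one]; exact hf' y hy) hmaps
  have hg := hf.comp_lineMap hx hy hxy
  have h₀ := hg.lt_slope_of_hasDerivWithinAt (by simp) (by simp) zero_lt_one hd₀
  have h₁ := hg.slope_lt_of_hasDerivWithinAt (by simp) (by simp) zero_lt_one hd₁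
  rw [inner_sub_left]
  linarith

theorem exists_pos_norm_add_smul_eq {x v : E} {R : ℝ} (hx : ‖x‖ ≤ R) (hv : v ≠ 0)
    (h : ‖x‖ < R ∨ ⟪x, v⟫ < 0) : ∃ t : ℝ, 0 < t ∧ ‖x + t • v‖ = R := by
  have ha : 0 < ‖v‖ ^ 2 := by positivity
  have hc : 0 ≤ R ^ 2 - ‖x‖ ^ 2 := by nlinarith [norm_nonneg x]
  set D := ⟪x, v⟫ ^ 2 + ‖v‖ ^ 2 * (R ^ 2 - ‖x‖ ^ 2) with hD
  have hb : ⟪x, v⟫ < √D := by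
    rcases h with h | h
    · have hc' : 0 < R ^ 2 - ‖x‖ ^ 2 := by nlinarith [norm_nonneg x]
      calc ⟪x, v⟫ ≤ √(⟪x, v⟫ ^ 2) := by rw [Real.sqrt_sq_eq_abs]; exact le_abs_self _
        _ < √D := Real.sqrt_lt_sqrt (sq_nonneg _) (by nlinarith)
    · exact h.trans_le (Real.sqrt_nonneg D)
  -- the positive root of `‖x + t • v‖² = R²`
  refine ⟨(√D - ⟪x, v⟫) / ‖v‖ ^ 2, div_pos (sub_pos.2 hb) ha, ?_⟩
  have hsq : ‖x + ((√D - ⟪x, v⟫) / ‖v‖ ^ 2) • v‖ ^ 2 = R ^ 2 := by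
    rw [norm_add_sq_real, norm_smul, real_inner_smul_right, mul_pow, Real.norm_eq_abs, sq_abs]
    field_simp
    linear_combination Real.sq_sqrt (by positivity : (0 : ℝ) ≤ D) + hD
  exact (sq_eq_sq₀ (norm_nonneg _) ((norm_nonneg x).trans hx)).1 hsq

theorem inner_sub_self_nonpos_of_norm_le {x y : E} (h : ‖y‖ ≤ ‖x‖) : ⟪x, y - x⟫ ≤ 0 := by
  rw [inner_sub_right, real_inner_self_eq_norm_sq]
  nlinarith [real_inner_le_norm x y, norm_nonneg x]

theorem IsMinOn.inner_sub_le_of_hasGradientWithinAt [CompleteSpace E] {s : Set E}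
    (hs : Convex ℝ s) {f : E → ℝ} {f' p a y : E} (ha : a ∈ s)
    (hmin : IsMinOn (fun z => f z - ⟪p, z⟫) s a) (hf : HasGradientWithinAt f f' s a)
    (hy : y ∈ s) : ⟪f' - p, a⟫ ≤ ⟪f' - p, y⟫ := by
  have := hmin.localize.hasFDerivWithinAt_nonneg
    ((hasGradientWithinAt_iff_hasFDerivWithinAt.1 hf).sub (innerSL ℝ p).hasFDerivWithinAt)
    (sub_mem_posTangentConeAt_of_segment_subset (hs.segment_subset ha hy))
  simp only [sub_apply, InnerProductSpace.toDual_apply_apply, innerSL_apply_apply,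
    inner_sub_right, inner_sub_left] at this ⊢
  linarith

theorem eq_neg_smul_of_forall_inner_le {w x : E} {R : ℝ} (hw : w ≠ 0) (hx : x ∈ closedBall 0 R)
    (h : ∀ y ∈ closedBall (0 : E) R, ⟪w, x⟫ ≤ ⟪w, y⟫) : x = -(R / ‖w‖) • w := by
  have hw' : 0 < ‖w‖ := norm_pos_iff.2 hw
  have hx' : ‖x‖ ≤ R := mem_closedBall_zero_iff.1 hx
  have hR : 0 ≤ R := (norm_nonneg x).trans hx'
  have hz : ‖-(R / ‖w‖) • w‖ = R := by
    rw [norm_smul, norm_neg, Real.norm_of_nonneg (by positivity), div_mul_cancel₀ _ hw'.ne']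
  have hwz : ⟪w, -(R / ‖w‖) • w⟫ = -(R * ‖w‖) := by
    rw [real_inner_smul_right, real_inner_self_eq_norm_sq]
    field_simp
  have hwx : ⟪w, x⟫ ≤ -(R * ‖w‖) := (h _ (mem_closedBall_zero_iff.2 hz.le)).trans_eq hwz
  have hsq : ‖x - -(R / ‖w‖) • w‖ ^ 2 ≤ 0 := by
    rw [norm_sub_sq_real, hz, real_inner_smul_right, real_inner_comm]
    have : R / ‖w‖ * ⟪w, x⟫ ≤ -R ^ 2 := by
      rw [div_mul_eq_mul_div, div_le_iff₀ hw']
      nlinarith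
    nlinarith [pow_le_pow_left₀ (norm_nonneg x) hx' 2]
  rw [← sub_eq_zero, ← norm_eq_zero]
  exact (pow_eq_zero_iff two_ne_zero).1 (hsq.antisymm (sq_nonneg _))

namespace StrictMonotoneOn

variable {F : E → E} {R : ℝ}

theorem norm_apply_lt (hF : StrictMonotoneOn F (closedBall 0 R))
    (hmaps : MapsTo F (sphere 0 R) (closedBall 0 R)) {x : E} (hx : ‖x‖ ≤ R) (hFx : F x ≠ 0)
    (h : ‖x‖ < R ∨ ⟪x, F x⟫ < 0) : ‖F x‖ < R := by
  obtain ⟨t, ht, hy⟩ := exists_pos_norm_add_smul_eq hx hFx h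
  have hyS : x + t • F x ∈ sphere (0 : E) R := mem_sphere_zero_iff_norm.2 hy
  have hne : x ≠ x + t • F x := by simpa [ht.ne'] using hFx
  have hmono := hF x (mem_closedBall_zero_iff.2 hx) _ (sphere_subset_closedBall hyS) hne
  have hbound : ⟪F (x + t • F x), F x⟫ ≤ R * ‖F x‖ :=
    (real_inner_le_norm _ _).trans
      (mul_le_mul_of_nonneg_right (mem_closedBall_zero_iff.1 (hmaps hyS)) (norm_nonneg _))
  rw [add_sub_cancel_left, real_inner_smul_right, inner_sub_left,
    real_inner_self_eq_norm_sq] at hmono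
  have hpos : 0 < ‖F x‖ := norm_pos_iff.2 hFx
  have hlt : ‖F x‖ ^ 2 < ⟪F (x + t • F x), F x⟫ :=
    sub_pos.1 ((pos_iff_pos_of_mul_pos hmono).1 ht)
  nlinarith

theorem mapsTo_closedBall (hF : StrictMonotoneOn F (closedBall 0 R))
    (hmaps : MapsTo F (sphere 0 R) (sphere 0 R)) : MapsTo F (closedBall 0 R) (closedBall 0 R) := by
  intro x hx
  rw [mem_closedBall_zero_iff] at hx ⊢
  rcases hx.lt_or_eq with hlt | heq
  · by_cases hFx : F x = 0
    · simpa [hFx] using (norm_nonneg x).trans hlt.le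
    exact (hF.norm_apply_lt (hmaps.mono_right sphere_subset_closedBall) hx hFx (.inl hlt)).le
  · exact (mem_sphere_zero_iff_norm.1 (hmaps (mem_sphere_zero_iff_norm.2 heq))).le

theorem le_norm_of_closedBall_subset_image (hF : StrictMonotoneOn F (closedBall 0 R))
    (hsurj : closedBall 0 R ⊆ F '' closedBall 0 R) {x : E} (hx : x ∈ sphere 0 R) :
    R ≤ ‖F x‖ := by
  by_contra! hlt
  have hxR : ‖x‖ = R := mem_sphere_zero_iff_norm.1 hx
  have hR : 0 < R := (norm_nonneg _).trans_lt hlt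
  set t := (R - ‖F x‖) / R
  have ht : 0 < t := div_pos (sub_pos.2 hlt) hR
  have hz : F x + t • x ∈ closedBall (0 : E) R := by
    rw [mem_closedBall_zero_iff]
    calc ‖F x + t • x‖ ≤ ‖F x‖ + t * R := by
          simpa [norm_smul, ht.le, hxR, abs_of_pos ht] using norm_add_le (F x) (t • x)
      _ = R := by rw [div_mul_cancel₀ _ hR.ne']; ring
  obtain ⟨y, hy, hFy⟩ := hsurj hz
  have hne : x ≠ y := by
    rintro rfl
    have : t • x = 0 := by simpa using hFy.symm
    rcases smul_eq_zero.1 this with h | rfl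
    · exact ht.ne' h
    · exact hR.ne' (by simpa using hxR.symm)
  have hmono := hF x (sphere_subset_closedBall hx) y hy hne
  rw [hFy, add_sub_cancel_left, real_inner_smul_left] at hmono
  have := inner_sub_self_nonpos_of_norm_le (x := x) (y := y)
    (hxR ▸ mem_closedBall_zero_iff.1 hy)
  nlinarith

end StrictMonotoneOn

theorem ball_subset_image_of_hasGradientWithinAt [CompleteSpace E] [ProperSpace E] {R : ℝ}
    {φ : E → ℝ} {φ' : E → E}
    (hφ : ∀ x ∈ closedBall (0 : E) R, HasGradientWithinAt φ (φ' x) (closedBall 0 R) x)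
    (hF : StrictMonotoneOn φ' (closedBall 0 R)) (hmaps : MapsTo φ' (sphere 0 R) (sphere 0 R)) :
    ball 0 R ⊆ φ' '' closedBall 0 R := by
  intro p hp
  have hpR : ‖p‖ < R := mem_ball_zero_iff.1 hp
  have hR : 0 < R := (norm_nonneg p).trans_lt hpR
  have hcont : ContinuousOn (fun z => φ z - ⟪p, z⟫) (closedBall 0 R) := fun z hz =>
    (hφ z hz).continuousWithinAt.sub (continuous_const.inner continuous_id).continuousWithinAt
  obtain ⟨x₀, hx₀, hmin⟩ := (isCompact_closedBall (0 : E) R).exists_isMinOn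
    ⟨0, mem_closedBall_self hR.le⟩ hcont
  have hvar : ∀ y ∈ closedBall (0 : E) R, ⟪φ' x₀ - p, x₀⟫ ≤ ⟪φ' x₀ - p, y⟫ := fun y hy =>
    hmin.inner_sub_le_of_hasGradientWithinAt (convex_closedBall 0 R) hx₀ (hφ x₀ hx₀) hy
  refine ⟨x₀, hx₀, ?_⟩
  by_contra hne
  have hw : φ' x₀ - p ≠ 0 := sub_ne_zero.2 hne
  have hx₀eq := eq_neg_smul_of_forall_inner_le hw hx₀ hvar
  have hx₀R : ‖x₀‖ = R := by
    rw [hx₀eq, norm_smul, norm_neg, Real.norm_of_nonneg (by positivity),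
      div_mul_cancel₀ _ (norm_ne_zero_iff.2 hw)]
  have hq : ‖φ' x₀‖ = R := mem_sphere_zero_iff_norm.1 (hmaps (mem_sphere_zero_iff_norm.2 hx₀R))
  have hinner : ⟪x₀, φ' x₀⟫ < 0 := by
    have : 0 < ⟪φ' x₀ - p, φ' x₀⟫ := by
      rw [inner_sub_left, real_inner_self_eq_norm_sq, hq]
      nlinarith [real_inner_le_norm p (φ' x₀)]
    nth_rw 1 [hx₀eq]
    rw [real_inner_smul_left]
    exact mul_neg_of_neg_of_pos (neg_neg_of_pos (by positivity)) this
  have hq₀ : φ' x₀ ≠ 0 := norm_ne_zero_iff.1 (hq.trans_ne hR.ne')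
  exact (hF.norm_apply_lt (hmaps.mono_right sphere_subset_closedBall) hx₀R.le hq₀
    (.inr hinner)).ne hq

end

/-- for a strictly convex `φ ∈ C¹(B̄)` on the closed ball `B̄` of
radius `R` centered at the origin, with continuous gradient `φ'`,
`∇φ(B̄) = B̄` if and only if `∇φ(∂B) ⊆ ∂B`. -/
theorem gradient_ball_iff_sphere {d : ℕ} (R : ℝ) (hR : 0 < R)
    (φ : Esp d → ℝ) (φ' : Esp d → Esp d)
    (hφdiff : ∀ x ∈ closedBall (0 : Esp d) R,
      HasGradientWithinAt φ (φ' x) (closedBall (0 : Esp d) R) x)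
    (hφ'cont : ContinuousOn φ' (closedBall (0 : Esp d) R))
    (hφconv : StrictConvexOn ℝ (closedBall (0 : Esp d) R) φ) :
    φ' '' closedBall (0 : Esp d) R = closedBall (0 : Esp d) R ↔
      φ' '' sphere (0 : Esp d) R ⊆ sphere (0 : Esp d) R := by
  have hF := hφconv.strictMonotoneOn_of_hasGradientWithinAt hφdiff
  constructor
  · rintro himg _ ⟨x, hx, rfl⟩
    have hle : ‖φ' x‖ ≤ R :=
      mem_closedBall_zero_iff.1 (himg ▸ mem_image_of_mem φ' (sphere_subset_closedBall hx))
    exact mem_sphere_zero_iff_norm.2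
      (hle.antisymm (hF.le_norm_of_closedBall_subset_image himg.ge hx))
  · intro hsph
    have hmaps : MapsTo φ' (sphere 0 R) (sphere 0 R) := mapsTo_iff_image_subset.2 hsph
    refine (hF.mapsTo_closedBall hmaps).image_subset.antisymm ?_
    have hclosed : IsClosed (φ' '' closedBall 0 R) :=
      ((isCompact_closedBall 0 R).image_of_continuousOn hφ'cont).isClosed
    exact (closure_ball (0 : Esp d) hR.ne').ge.trans
      (hclosed.closure_subset_iff.2 (ball_subset_image_of_hasGradientWithinAt hφdiff hF hmaps))
end
end

section
/- Let X be a separable metric space, x* ∈ X, and f₁, f₂, … i.i.d. random elements of C_b(X) with f₁(x*) = 0 a.s. and E sup_{x∈X}|f₁(x)| < ∞. Let X_n be random elements of X with X_n → x* a.s. Then (1/n) Σ_{i=1}^n f_i(X_n) → 0 a.s. -/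
/-! Bound `|fᵢ(Xₙ)|` by `‖fᵢ.domRestrict (closedBall x* δ)‖`, the supremum of `|fᵢ|` on the ball
(the modulus `ω_{fᵢ}(δ, x*)`, as `fᵢ(x*) = 0`), once `Xₙ` lies in that ball. These suprema are
i.i.d. and integrable, so by the strong law their averages converge a.s. to their mean, and the
mean tends to `0` as `δ → 0⁺` by dominated convergence, since `f₁` is continuous and vanishes at
`x*`. Running this along a sequence `δₖ → 0⁺` keeps the exceptional null sets countable. -/

open MeasureTheory Filter Metric Finset Topology ProbabilityTheory BoundedContinuousFunction

namespace BoundedContinuousFunction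

variable {X E : Type*} [PseudoMetricSpace X] [NormedAddCommGroup E]

theorem norm_apply_le_norm_domRestrict (f : X →ᵇ E) {s : Set X} {y : X} (hy : y ∈ s) :
    ‖f y‖ ≤ ‖f.domRestrict s‖ :=
  (f.domRestrict s).norm_coe_le_norm ⟨y, hy⟩

theorem norm_domRestrict_le (f : X →ᵇ E) (s : Set X) : ‖f.domRestrict s‖ ≤ ‖f‖ :=
  norm_compContinuous_le f _

theorem continuous_norm_domRestrict (s : Set X) :
    Continuous fun f : X →ᵇ E => ‖f.domRestrict s‖ :=
  (continuous_compContinuous _).norm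

theorem tendsto_norm_domRestrict_closedBall {f : X →ᵇ E} {x : X} (hx : f x = 0) :
    Tendsto (fun δ => ‖f.domRestrict (closedBall x δ)‖) (𝓝[>] 0) (𝓝 0) := by
  rw [Metric.tendsto_nhds]
  intro ε hε
  obtain ⟨δ₀, hδ₀, hf⟩ :=
    Metric.continuousAt_iff.1 f.continuous.continuousAt (ε / 2) (half_pos hε)
  filter_upwards [Ioo_mem_nhdsGT hδ₀] with δ hδ
  rw [dist_zero_right, norm_norm]
  refine ((norm_le (half_pos hε).le).2 fun y => ?_).trans_lt (half_lt_self hε)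
  simpa [hx] using (hf ((mem_closedBall.1 y.2).trans_lt hδ.2)).le

theorem tendsto_average_apply_of_forall_eventually_average_norm_lt [NormedSpace ℝ E]
    {f : ℕ → X →ᵇ E} {x : ℕ → X} {x₀ : X} (hx : Tendsto x atTop (𝓝 x₀))
    (havg : ∀ ε > 0, ∃ δ > 0, ∀ᶠ n in atTop,
      (∑ i ∈ range n, ‖(f i).domRestrict (closedBall x₀ δ)‖) / n < ε) :
    Tendsto (fun n : ℕ => (n : ℝ)⁻¹ • ∑ i ∈ range n, f i (x n)) atTop (𝓝 0) := by
  rw [Metric.tendsto_nhds]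
  intro ε hε
  obtain ⟨δ, hδ, hsmall⟩ := havg ε hε
  filter_upwards [hsmall, hx.eventually (closedBall_mem_nhds x₀ hδ)] with n hn hxn
  calc dist ((n : ℝ)⁻¹ • ∑ i ∈ range n, f i (x n)) 0
      = (n : ℝ)⁻¹ * ‖∑ i ∈ range n, f i (x n)‖ := by
        rw [dist_zero_right, norm_smul, norm_inv, Real.norm_natCast]
    _ ≤ (n : ℝ)⁻¹ * ∑ i ∈ range n, ‖(f i).domRestrict (closedBall x₀ δ)‖ := by
        gcongr
        exact (norm_sum_le _ _).trans
          (sum_le_sum fun i _ => (f i).norm_apply_le_norm_domRestrict hxn)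
    _ < ε := by rwa [inv_mul_eq_div]

end BoundedContinuousFunction

section Probability

variable {Ω X E : Type*} [MeasurableSpace Ω] {μ : Measure Ω}

theorem ae_tendsto_average_comp_of_iIndepFun {B : Type*} [MeasurableSpace B]
    {F : ℕ → Ω → B} (hF : ∀ n, AEMeasurable (F n) μ) (hindep : iIndepFun F μ)
    (hident : ∀ n, μ.map (F n) = μ.map (F 0)) {φ : B → ℝ} (hφ : Measurable φ)
    (hint : Integrable (fun ω => φ (F 0 ω)) μ) :
    ∀ᵐ ω ∂μ, Tendsto (fun n : ℕ => (∑ i ∈ range n, φ (F i ω)) / n) atTop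
      (𝓝 (∫ ω, φ (F 0 ω) ∂μ)) :=
  strong_law_ae_real (fun i ω => φ (F i ω)) hint
    (fun _ _ hij => (hindep.indepFun hij).comp hφ hφ)
    (fun i => (IdentDistrib.mk (hF i) (hF 0) (hident i)).comp hφ)

variable [PseudoMetricSpace X] [NormedAddCommGroup E] [MeasurableSpace (X →ᵇ E)]
  [OpensMeasurableSpace (X →ᵇ E)] {G : Ω → X →ᵇ E}

theorem integrable_norm_domRestrict (hG : AEMeasurable G μ)
    (hint : Integrable (fun ω => ‖G ω‖) μ) (s : Set X) :
    Integrable (fun ω => ‖(G ω).domRestrict s‖) μ :=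
  hint.mono' ((continuous_norm_domRestrict s).measurable.comp_aemeasurable hG).aestronglyMeasurable
    (.of_forall fun ω => by simpa using (G ω).norm_domRestrict_le s)

theorem tendsto_integral_norm_domRestrict_closedBall (hG : AEMeasurable G μ)
    (hint : Integrable (fun ω => ‖G ω‖) μ) {x : X} (hzero : ∀ᵐ ω ∂μ, G ω x = 0) :
    Tendsto (fun δ => ∫ ω, ‖(G ω).domRestrict (closedBall x δ)‖ ∂μ) (𝓝[>] 0) (𝓝 0) := by
  have hbound (δ : ℝ) (ω : Ω) : ‖‖(G ω).domRestrict (closedBall x δ)‖‖ ≤ ‖G ω‖ := by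
    simpa using (G ω).norm_domRestrict_le _
  have hlim : ∀ᵐ ω ∂μ,
      Tendsto (fun δ => ‖(G ω).domRestrict (closedBall x δ)‖) (𝓝[>] 0) (𝓝 0) := by
    filter_upwards [hzero] with ω hω
    exact tendsto_norm_domRestrict_closedBall hω
  simpa using tendsto_integral_filter_of_dominated_convergence (f := fun _ => (0 : ℝ)) _
    (.of_forall fun δ => (integrable_norm_domRestrict hG hint _).aestronglyMeasurable)
    (.of_forall fun δ => .of_forall (hbound δ)) hint hlim

end Probability

theorem lln_random_functions_general
    {X : Type*} [MetricSpace X]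
    {Ω' : Type*} [MeasurableSpace Ω'] (μ : Measure Ω')
    [MeasurableSpace (X →ᵇ ℝ)] [BorelSpace (X →ᵇ ℝ)]
    (xstar : X)
    (F : ℕ → Ω' → (X →ᵇ ℝ)) (hFmeas : ∀ n, Measurable (F n))
    (hindep : ProbabilityTheory.iIndepFun
      (m := fun _ : ℕ => (inferInstance : MeasurableSpace (X →ᵇ ℝ))) F μ)
    (hident : ∀ n, μ.map (F n) = μ.map (F 0))
    (hzero : ∀ᵐ ω ∂μ, F 0 ω xstar = 0)
    (hint : Integrable (fun ω => ‖F 0 ω‖) μ)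
    (Xn : ℕ → Ω' → X)
    (hXconv : ∀ᵐ ω ∂μ, Tendsto (fun n => Xn n ω) atTop (nhds xstar)) :
    ∀ᵐ ω ∂μ, Tendsto
      (fun n : ℕ => (1 / (n : ℝ)) * ∑ i ∈ Finset.range n, (F i ω) (Xn n ω))
      atTop (nhds 0) := by
  obtain ⟨r, hr⟩ := (𝓝[>] (0 : ℝ)).exists_seq_tendsto
  have hmean := (tendsto_integral_norm_domRestrict_closedBall (hFmeas 0).aemeasurable hint
    hzero).comp hr
  have hslln := fun k => ae_tendsto_average_comp_of_iIndepFun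
    (fun n => (hFmeas n).aemeasurable) hindep hident
    (continuous_norm_domRestrict (closedBall xstar (r k))).measurable
    (integrable_norm_domRestrict (hFmeas 0).aemeasurable hint _)
  filter_upwards [hXconv, ae_all_iff.2 hslln] with ω hX hsl
  simp_rw [one_div, ← smul_eq_mul]
  refine tendsto_average_apply_of_forall_eventually_average_norm_lt hX fun ε hε => ?_
  obtain ⟨k, hk, hrk⟩ :=
    ((hmean.eventually (gt_mem_nhds hε)).and (hr.eventually self_mem_nhdsWithin)).exists
  exact ⟨r k, hrk, (hsl k).eventually (gt_mem_nhds hk)⟩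

/-- if `f₁, f₂, …` are i.i.d. random bounded continuous functions
on a separable metric space `X` with `f₁(x*) = 0` a.s. and `E sup |f₁| < ∞`, and
`X_n → x*` a.s., then `(1/n) Σ_{i=1}^n f_i(X_n) → 0` a.s. -/
theorem lln_random_functions
    {X : Type*} [MetricSpace X] [TopologicalSpace.SeparableSpace X]
    [MeasurableSpace X] [BorelSpace X]
    {Ω' : Type*} [MeasurableSpace Ω'] (μ : Measure Ω') [IsProbabilityMeasure μ]
    [MeasurableSpace (X →ᵇ ℝ)] [BorelSpace (X →ᵇ ℝ)]
    (xstar : X)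
    (F : ℕ → Ω' → (X →ᵇ ℝ)) (hFmeas : ∀ n, Measurable (F n))
    (hindep : ProbabilityTheory.iIndepFun
      (m := fun _ : ℕ => (inferInstance : MeasurableSpace (X →ᵇ ℝ))) F μ)
    (hident : ∀ n, μ.map (F n) = μ.map (F 0))
    (hzero : ∀ᵐ ω ∂μ, F 0 ω xstar = 0)
    (hint : Integrable (fun ω => ‖F 0 ω‖) μ)
    (Xn : ℕ → Ω' → X) (hXmeas : ∀ n, Measurable (Xn n))
    (hXconv : ∀ᵐ ω ∂μ, Tendsto (fun n => Xn n ω) atTop (nhds xstar)) :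
    ∀ᵐ ω ∂μ, Tendsto
      (fun n : ℕ => (1 / (n : ℝ)) * ∑ i ∈ Finset.range n, (F i ω) (Xn n ω))
      atTop (nhds 0) :=
  lln_random_functions_general μ xstar F hFmeas hindep hident hzero hint Xn hXconv
end

section
/- Let H be a separable Hilbert space, {A_n} a sequence of random bounded operators on H converging to a fixed bounded operator A in the strong operator topology almost surely and bounded in probability (for each ε > 0 there is M_ε with P(‖A_n‖_op > M_ε) ≤ ε for all n). Let X_n be H-valued random variables converging in distribution to X. Then A_n X_n converges in distribution to AX. -/
/-!
Since `A` is continuous, `A Xₙ → A X` in distribution, so by Slutsky's lemma it suffices that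
`Aₙ Xₙ - A Xₙ → 0` in probability. The laws of the `Xₙ` converge, hence are tight: `Xₙ` lies in
a fixed compact `K` up to probability `η`. Cover `K` by finitely many balls of radius `r`; on the
event `‖Aₙ‖ ≤ M` we get `‖Aₙ x - A x‖ ≤ (M + ‖A‖) r + ‖Aₙ c - A c‖` whenever `x` is within `r`
of the centre `c`, and at the finitely many centres `Aₙ c → A c` in probability.
-/

open MeasureTheory Filter BoundedContinuousFunction Topology Metric

namespace ContinuousLinearMap

variable {𝕜 E F : Type*} [NontriviallyNormedField 𝕜] [SeminormedAddCommGroup E] [NormedSpace 𝕜 E]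
  [SeminormedAddCommGroup F] [NormedSpace 𝕜 F]

lemma norm_sub_apply_lt_of_mem_ball {S T : E →L[𝕜] F} {M r δ : ℝ} {x c : E}
    (hS : ‖S‖ ≤ M) (hr : (M + ‖T‖) * r ≤ δ / 2) (hx : x ∈ ball c r)
    (hc : ‖S c - T c‖ < δ / 2) : ‖S x - T x‖ < δ := by
  have hxc : ‖x - c‖ ≤ r := (mem_ball_iff_norm.1 hx).le
  calc ‖S x - T x‖ = ‖(S - T) (x - c) + (S c - T c)‖ := by
        simp only [map_sub, _root_.sub_apply, sub_add_cancel]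
    _ ≤ ‖S - T‖ * ‖x - c‖ + ‖S c - T c‖ :=
        (norm_add_le _ _).trans (by gcongr; exact le_opNorm _ _)
    _ ≤ (M + ‖T‖) * r + ‖S c - T c‖ := by
        gcongr
        · exact add_nonneg ((norm_nonneg S).trans hS) (norm_nonneg T)
        · exact (norm_sub_le S T).trans (by gcongr)
    _ < δ := by linarith

lemma setOf_le_norm_apply_sub_subset {Ω : Type*} {S : Ω → E →L[𝕜] F} {T : E →L[𝕜] F} {y : Ω → E}
    {K : Set E} {t : Finset E} {M r δ : ℝ} (hcover : K ⊆ ⋃ c ∈ t, ball c r)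
    (hr : (M + ‖T‖) * r ≤ δ / 2) :
    {ω | δ ≤ ‖S ω (y ω) - T (y ω)‖} ⊆
      {ω | M < ‖S ω‖} ∪ y ⁻¹' Kᶜ ∪ ⋃ c ∈ t, {ω | δ / 2 ≤ ‖S ω c - T c‖} := by
  intro ω hω
  by_contra! h
  simp only [Set.mem_union, Set.mem_iUnion, Set.mem_ofPred_eq, Set.mem_preimage,
    Set.mem_compl_iff, not_or, not_lt, not_not, not_exists, not_le] at h
  obtain ⟨⟨hSM, hyK⟩, hnet⟩ := h
  obtain ⟨c, hc, hyc⟩ := Set.mem_iUnion₂.1 (hcover hyK)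
  exact (norm_sub_apply_lt_of_mem_ball hSM hr hyc (hnet c hc)).not_ge hω

end ContinuousLinearMap

namespace MeasureTheory

variable {Ω ι E : Type*} [MeasurableSpace Ω] {μ : Measure Ω} [IsProbabilityMeasure μ]
  [MeasurableSpace E]

section Distribution

lemma tendstoInDistribution_iff_forall_integral_tendsto [TopologicalSpace E]
    [OpensMeasurableSpace E] {l : Filter ι} {X : ι → Ω → E} {Z : Ω → E}
    (hX : ∀ i, AEMeasurable (X i) μ) (hZ : AEMeasurable Z μ) :
    TendstoInDistribution X l Z (fun _ ↦ μ) μ ↔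
      ∀ f : E →ᵇ ℝ, Tendsto (fun i ↦ ∫ ω, f (X i ω) ∂μ) l (𝓝 (∫ ω, f (Z ω) ∂μ)) := by
  have hmap : ∀ {Y : Ω → E} (hY : AEMeasurable Y μ) (f : E →ᵇ ℝ),
      ∫ x, f x ∂μ.map Y = ∫ ω, f (Y ω) ∂μ := fun hY f ↦
    integral_map hY f.continuous.aestronglyMeasurable
  refine ⟨fun h f ↦ ?_, fun h ↦ ⟨hX, hZ, ?_⟩⟩
  · simpa only [ProbabilityMeasure.coe_mk, hmap (hX _), hmap hZ] using
      ProbabilityMeasure.tendsto_iff_forall_integral_tendsto.1 h.tendsto f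
  · refine ProbabilityMeasure.tendsto_iff_forall_integral_tendsto.2 fun f ↦ ?_
    simpa only [ProbabilityMeasure.coe_mk, hmap (hX _), hmap hZ] using h f

lemma TendstoInDistribution.isTightMeasureSet_range [PseudoMetricSpace E] [CompleteSpace E]
    [SecondCountableTopology E] [BorelSpace E] {Ω' : Type*} [MeasurableSpace Ω'] {μ' : Measure Ω'}
    [IsProbabilityMeasure μ'] {X : ℕ → Ω → E} {Z : Ω' → E}
    (h : TendstoInDistribution X atTop Z (fun _ ↦ μ) μ') :
    IsTightMeasureSet (Set.range fun n ↦ μ.map (X n)) := by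
  have hcomp := h.tendsto.isCompact_insert_range
  refine (isTightMeasureSet_of_isCompact_closure
    (hcomp.closure_of_subset (Set.subset_insert _ _))).subset ?_
  rintro _ ⟨n, rfl⟩
  exact ⟨_, Set.mem_range_self n, rfl⟩

end Distribution

section OperatorApply

variable {𝕜 F : Type*} [NontriviallyNormedField 𝕜] [SeminormedAddCommGroup E] [NormedSpace 𝕜 E]
  [SeminormedAddCommGroup F] [NormedSpace 𝕜 F]

theorem tendstoInMeasure_apply_sub_of_isTightMeasureSet {T : ℕ → Ω → E →L[𝕜] F}
    {T₀ : E →L[𝕜] F} {Y : ℕ → Ω → E}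
    (hT : ∀ x, TendstoInMeasure μ (fun n ω ↦ T n ω x) atTop fun _ ↦ T₀ x)
    (hbdd : ∀ ε : ℝ, 0 < ε → ∃ M : ℝ, ∀ n, μ {ω | M < ‖T n ω‖} ≤ ENNReal.ofReal ε)
    (hY : ∀ n, AEMeasurable (Y n) μ) (htight : IsTightMeasureSet (Set.range fun n ↦ μ.map (Y n))) :
    TendstoInMeasure μ (fun n ω ↦ T n ω (Y n ω) - T₀ (Y n ω)) atTop 0 := by
  rw [tendstoInMeasure_iff_measureReal_norm]
  intro δ hδ
  simp only [Pi.zero_apply, sub_zero]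
  refine tendsto_order.2 ⟨fun a ha ↦ .of_forall fun n ↦ ha.trans_le measureReal_nonneg,
    fun ε hε ↦ ?_⟩
  obtain ⟨η, hη, hηε⟩ : ∃ η, 0 < η ∧ 3 * η < ε := ⟨ε / 4, by positivity, by linarith⟩
  obtain ⟨M₀, hM₀⟩ := hbdd η hη
  obtain ⟨M, hM0, hM⟩ : ∃ M, 0 ≤ M ∧ ∀ n, μ.real {ω | M < ‖T n ω‖} ≤ η :=
    ⟨max M₀ 0, le_max_right _ _, fun n ↦ ENNReal.toReal_le_of_le_ofReal hη.le <|
      (measure_mono fun ω (h : max M₀ 0 < _) ↦ (le_max_left M₀ 0).trans_lt h).trans (hM₀ n)⟩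
  obtain ⟨K, hKc, hK⟩ :=
    isTightMeasureSet_iff_exists_isCompact_measure_compl_le.1 htight _ (ENNReal.ofReal_pos.2 hη)
  have hYK : ∀ n, μ.real (Y n ⁻¹' Kᶜ) ≤ η := fun n ↦ ENNReal.toReal_le_of_le_ofReal hη.le <|
    (Measure.le_map_apply (hY n) _).trans (hK _ ⟨n, rfl⟩)
  obtain ⟨r, hr0, hr⟩ : ∃ r, 0 < r ∧ (M + ‖T₀‖) * r ≤ δ / 2 :=
    ⟨δ / (2 * (M + ‖T₀‖ + 1)), by positivity, by
      rw [mul_div_assoc', div_le_div_iff₀ (by positivity) two_pos]; nlinarith⟩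
  obtain ⟨t, -, hcover⟩ := hKc.elim_nhds_subcover (fun c ↦ ball c r) fun c _ ↦
    ball_mem_nhds c hr0
  have hnet : Tendsto (fun n ↦ ∑ c ∈ t, μ.real {ω | δ / 2 ≤ ‖T n ω c - T₀ c‖}) atTop (𝓝 0) := by
    simpa using tendsto_finsetSum t fun c _ ↦
      tendstoInMeasure_iff_measureReal_norm.1 (hT c) (δ / 2) (half_pos hδ)
  filter_upwards [hnet.eventually (eventually_lt_nhds hη)] with n hn
  calc μ.real {ω | δ ≤ ‖T n ω (Y n ω) - T₀ (Y n ω)‖}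
      ≤ μ.real {ω | M < ‖T n ω‖} + μ.real (Y n ⁻¹' Kᶜ)
        + ∑ c ∈ t, μ.real {ω | δ / 2 ≤ ‖T n ω c - T₀ c‖} :=
        (measureReal_mono (ContinuousLinearMap.setOf_le_norm_apply_sub_subset hcover hr)).trans <|
          (measureReal_union_le _ _).trans <|
            add_le_add (measureReal_union_le _ _) (measureReal_biUnion_finset_le _ _)
    _ < ε := by linarith [hM n, hYK n]

end OperatorApply

end MeasureTheory

/-- Slutsky's theorem in a separable Hilbert space. If random
bounded operators `A_n` converge a.s. to `A` in the strong operator topology and are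
bounded in probability, and `X_n → X` in distribution, then `A_n X_n → A X` in
distribution. -/
theorem slutsky_hilbert
    {H : Type*} [NormedAddCommGroup H] [InnerProductSpace ℝ H] [CompleteSpace H]
    [TopologicalSpace.SeparableSpace H] [MeasurableSpace H] [BorelSpace H]
    {Ω' : Type*} [MeasurableSpace Ω'] (μ : Measure Ω') [IsProbabilityMeasure μ]
    (An : ℕ → Ω' → (H →L[ℝ] H)) (A : H →L[ℝ] H)
    (hAmeas : ∀ n (u : H), Measurable (fun ω => An n ω u))
    (hSOT : ∀ᵐ ω ∂μ, ∀ u : H, Tendsto (fun n => An n ω u) atTop (nhds (A u)))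
    (hbdd : ∀ ε : ℝ, 0 < ε → ∃ M : ℝ, ∀ n,
      μ {ω | M < ‖An n ω‖} ≤ ENNReal.ofReal ε)
    (Xn : ℕ → Ω' → H) (hXnmeas : ∀ n, Measurable (Xn n))
    (X : Ω' → H) (hXmeas : Measurable X)
    (hconv : ∀ f : H →ᵇ ℝ,
      Tendsto (fun n => ∫ ω, f (Xn n ω) ∂μ) atTop (nhds (∫ ω, f (X ω) ∂μ))) :
    ∀ f : H →ᵇ ℝ,
      Tendsto (fun n => ∫ ω, f (An n ω (Xn n ω)) ∂μ) atTop
        (nhds (∫ ω, f (A (X ω)) ∂μ)) := by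
  have : SecondCountableTopology H := UniformSpace.secondCountable_of_separable H
  have hAX : ∀ n, Measurable fun ω ↦ An n ω (Xn n ω) := fun n ↦
    (measurable_uncurry_of_continuous_of_measurable (fun ω ↦ (An n ω).continuous)
      fun u ↦ hAmeas n u).comp ((hXnmeas n).prodMk measurable_id)
  have hX : TendstoInDistribution Xn atTop X (fun _ ↦ μ) μ :=
    (tendstoInDistribution_iff_forall_integral_tendsto (fun n ↦ (hXnmeas n).aemeasurable)
      hXmeas.aemeasurable).2 hconv
  have hAn : ∀ u, TendstoInMeasure μ (fun n ω ↦ An n ω u) atTop fun _ ↦ A u := fun u ↦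
    tendstoInMeasure_of_tendsto_ae (fun n ↦ (hAmeas n u).aestronglyMeasurable)
      (hSOT.mono fun ω hω ↦ hω u)
  have hdiff := tendstoInMeasure_apply_sub_of_isTightMeasureSet hAn hbdd
    (fun n ↦ (hXnmeas n).aemeasurable) hX.isTightMeasureSet_range
  have hlim := tendstoInDistribution_of_tendstoInMeasure_sub _ _
    (hX.continuous_comp A.continuous) hdiff fun n ↦ (hAX n).aemeasurable
  exact (tendstoInDistribution_iff_forall_integral_tendsto (fun n ↦ (hAX n).aemeasurable)
    (A.continuous.measurable.comp hXmeas).aemeasurable).1 hlim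
end
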